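/- arXiv:1410.4084 — 13 statements merged into one kernel-verified Lean document; each statement's English description precedes it below -/
import Mathlib

section
/- For any positive integers k < n and positive integers n_1, n_2, ..., n_k with n_1 + n_2 + ... + n_k = n, we have k·log₂(k) + n_1·log₂(n_1) + n_2·log₂(n_2) + ... + n_k·log₂(n_k) ≤ n·log₂(n). -/
/-!
Removing one part `nᵢ` leaves at least `k - 1` units, so `k ≤ n - nᵢ + 1`. Bernoulli's inequality
gives `n - nᵢ + 1 ≤ (n / nᵢ) ^ nᵢ`, hence `log₂ k ≤ nᵢ log₂ n - nᵢ log₂ nᵢ` for every `i`;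
summing over the `k` parts yields the claim.
-/

open Finset Real

lemma sub_add_one_le_div_rpow_self {a N : ℝ} (ha : 1 ≤ a) (hN : 0 ≤ N) :
    N - a + 1 ≤ (N / a) ^ a := by
  have ha0 : a ≠ 0 := by positivity
  have hbern := one_add_mul_self_le_rpow_one_add
    (show -1 ≤ N / a - 1 by linarith [div_nonneg hN (zero_le_one.trans ha)]) ha
  calc N - a + 1 = 1 + a * (N / a - 1) := by field_simp; ring
    _ ≤ (1 + (N / a - 1)) ^ a := hbern
    _ = (N / a) ^ a := by ring_nf

lemma logb_sub_add_one_le {b a N : ℝ} (hb : 1 < b) (ha : 1 ≤ a) (haN : a ≤ N) :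
    logb b (N - a + 1) ≤ a * logb b N - a * logb b a := by
  have ha0 : 0 < a := zero_lt_one.trans_le ha
  have hN0 : 0 < N := ha0.trans_le haN
  calc logb b (N - a + 1) ≤ logb b ((N / a) ^ a) :=
        logb_le_logb_of_le hb (by linarith) (sub_add_one_le_div_rpow_self ha hN0.le)
    _ = a * logb b (N / a) := logb_rpow_eq_mul_logb_of_pos (div_pos hN0 ha0)
    _ = a * logb b N - a * logb b a := by rw [logb_div hN0.ne' ha0.ne']; ring

lemma Fintype.card_add_le_sum_add_one {ι : Type*} [Fintype ι] {f : ι → ℕ}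
    (hf : ∀ i, 0 < f i) (i : ι) : Fintype.card ι + f i ≤ ∑ j, f j + 1 := by
  classical
  have hrest : (univ.erase i).card ≤ ∑ j ∈ univ.erase i, f j := by
    simpa using card_nsmul_le_sum (univ.erase i) f 1 fun j _ => hf j
  rw [card_erase_of_mem (mem_univ i), card_univ] at hrest
  have hcard : 0 < Fintype.card ι := Fintype.card_pos_iff.mpr ⟨i⟩
  rw [← sum_erase_add _ _ (mem_univ i)]
  omega

lemma logb_card_le_mul_logb_sum_sub {ι : Type*} [Fintype ι] {f : ι → ℕ}
    (hf : ∀ i, 0 < f i) (i : ι) :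
    logb 2 (Fintype.card ι) ≤
      (f i : ℝ) * logb 2 (∑ j, f j : ℕ) - (f i : ℝ) * logb 2 (f i) := by
  have hbound := Fintype.card_add_le_sum_add_one hf i
  have hcard_pos : 0 < Fintype.card ι := Fintype.card_pos_iff.mpr ⟨i⟩
  have hcard : (0 : ℝ) < Fintype.card ι := by exact_mod_cast hcard_pos
  have hfi : (1 : ℝ) ≤ f i := by exact_mod_cast hf i
  have hfi_le : (f i : ℝ) ≤ (∑ j, f j : ℕ) := by exact_mod_cast (by omega : f i ≤ ∑ j, f j)
  have hcard_le : (Fintype.card ι : ℝ) ≤ (∑ j, f j : ℕ) - f i + 1 := by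
    have hbound_real : ((Fintype.card ι + f i : ℕ) : ℝ) ≤ (∑ j, f j + 1 : ℕ) := by
      exact_mod_cast hbound
    push_cast at hbound_real ⊢
    linarith
  exact (logb_le_logb_of_le one_lt_two hcard hcard_le).trans
    (logb_sub_add_one_le one_lt_two hfi hfi_le)

theorem card_mul_logb_card_add_sum_mul_logb_le {ι : Type*} [Fintype ι] {f : ι → ℕ}
    (hf : ∀ i, 0 < f i) :
    (Fintype.card ι : ℝ) * logb 2 (Fintype.card ι) + ∑ i, (f i : ℝ) * logb 2 (f i) ≤
      (∑ i, f i : ℕ) * logb 2 (∑ i, f i : ℕ) := by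
  have hsum := card_nsmul_le_sum univ _ _ fun i _ => logb_card_le_mul_logb_sum_sub hf i
  rw [sum_sub_distrib, ← sum_mul, card_univ, nsmul_eq_mul] at hsum
  push_cast at hsum ⊢
  linarith

theorem stmt0_general (k n : ℕ) (f : Fin k → ℕ)
    (hf : ∀ i, 0 < f i) (hsum : ∑ i, f i = n) :
    (k : ℝ) * Real.logb 2 k + ∑ i, (f i : ℝ) * Real.logb 2 (f i) ≤ (n : ℝ) * Real.logb 2 n := by
  simpa [hsum] using card_mul_logb_card_add_sum_mul_logb_le hf

/-- For any positive integers `k < n` and positive integers `n₁,…,n_k` summing to `n`,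
`k·log₂ k + ∑ nᵢ·log₂ nᵢ ≤ n·log₂ n`. -/
theorem stmt0 (k n : ℕ) (hk : 0 < k) (hkn : k < n) (f : Fin k → ℕ)
    (hf : ∀ i, 0 < f i) (hsum : ∑ i, f i = n) :
    (k : ℝ) * Real.logb 2 k + ∑ i, (f i : ℝ) * Real.logb 2 (f i) ≤ (n : ℝ) * Real.logb 2 n :=
  stmt0_general k n f hf hsum
end

section
/- Every 2K₂-free bipartite graph with at least three vertices has two vertices x and y lying in the same part of the bipartition such that the symmetric difference of their neighbourhoods has size at most 1. -/
/-- Every `2K₂`-free bipartite graph (given as a relation `E` between the two parts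
`V₁` and `V₂`) with at least three vertices has two vertices in the same part whose
neighbourhoods have symmetric difference of size at most 1. -/
theorem stmt4 {V₁ V₂ : Type*} [Fintype V₁] [Fintype V₂] (E : V₁ → V₂ → Prop)
    (hfree : ∀ (a c : V₁) (b d : V₂), E a b → E c d → ¬ E a d → ¬ E c b → False)
    (hsize : 3 ≤ Fintype.card V₁ + Fintype.card V₂) :
    (∃ x y : V₁, x ≠ y ∧ (symmDiff {b | E x b} {b | E y b}).ncard ≤ 1) ∨
    (∃ x y : V₂, x ≠ y ∧ (symmDiff {a | E a x} {a | E a y}).ncard ≤ 1) := by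
  classical
  set N : V₁ → Set V₂ := fun a => {b | E a b} with hN
  have chain : ∀ a a' : V₁, N a ⊆ N a' ∨ N a' ⊆ N a := by
    intro a a'
    by_contra h
    push_neg at h
    obtain ⟨h1, h2⟩ := h
    obtain ⟨b, hb, hb'⟩ := Set.not_subset.mp h1
    obtain ⟨d, hd, hd'⟩ := Set.not_subset.mp h2
    exact hfree a a' b d hb hd hd' hb'
  by_cases hV₁ : Fintype.card V₁ ≤ 1
  · -- V₂ has at least two vertices; symmetric differences on the V₂ side sit inside V₁
    right
    have hV₂ : 2 ≤ Fintype.card V₂ := by omega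
    obtain ⟨x, y, hxy⟩ := Fintype.exists_pair_of_one_lt_card (by omega : 1 < Fintype.card V₂)
    refine ⟨x, y, hxy, ?_⟩
    calc (symmDiff {a | E a x} {a | E a y}).ncard
        ≤ (Set.univ : Set V₁).ncard := Set.ncard_le_ncard (Set.subset_univ _) Set.finite_univ
      _ = Fintype.card V₁ := by rw [Set.ncard_univ]; exact Nat.card_eq_fintype_card
      _ ≤ 1 := hV₁
  · -- main case: |V₁| ≥ 2
    have hV₁' : 1 < Fintype.card V₁ := by omega
    -- x₀ with globally minimal neighbourhood
    have : Nonempty V₁ := Fintype.card_pos_iff.mp (by omega)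
    obtain ⟨x₀, -, hx₀⟩ := Finset.exists_min_image Finset.univ (fun a => (N a).ncard)
      ⟨Classical.arbitrary V₁, Finset.mem_univ _⟩
    have hmin : ∀ a : V₁, N x₀ ⊆ N a := by
      intro a
      rcases chain x₀ a with h | h
      · exact h
      · have := Set.eq_of_subset_of_ncard_le h (hx₀ a (Finset.mem_univ a)) (Set.toFinite _)
        exact this ▸ Set.Subset.rfl
    -- x₁ with minimal neighbourhood among the rest
    have hne : (Finset.univ.erase x₀).Nonempty := by
      rw [← Finset.card_pos, Finset.card_erase_of_mem (Finset.mem_univ _), Finset.card_univ]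
      omega
    obtain ⟨x₁, hx₁mem, hx₁⟩ := Finset.exists_min_image (Finset.univ.erase x₀)
      (fun a => (N a).ncard) hne
    have hx₁ne : x₁ ≠ x₀ := Finset.ne_of_mem_erase hx₁mem
    have hmin₁ : ∀ a : V₁, a ≠ x₀ → N x₁ ⊆ N a := by
      intro a ha
      rcases chain x₁ a with h | h
      · exact h
      · have := Set.eq_of_subset_of_ncard_le h
          (hx₁ a (Finset.mem_erase.mpr ⟨ha, Finset.mem_univ a⟩)) (Set.toFinite _)
        exact this ▸ Set.Subset.rfl
    have hsd : symmDiff (N x₁) (N x₀) = N x₁ \ N x₀ := by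
      rw [Set.symmDiff_def]
      have : N x₀ \ N x₁ = ∅ := Set.diff_eq_empty.mpr (hmin x₁)
      rw [this, Set.union_empty]
    by_cases hcard : (N x₁ \ N x₀).ncard ≤ 1
    · left
      exact ⟨x₁, x₀, hx₁ne, by show (symmDiff (N x₁) (N x₀)).ncard ≤ 1; rw [hsd]; exact hcard⟩
    · right
      push_neg at hcard
      obtain ⟨b, d, hb, hd, hbd⟩ := (Set.one_lt_ncard_iff (Set.toFinite _)).mp hcard
      refine ⟨b, d, hbd, ?_⟩
      have key : {a | E a b} = {a | E a d} := by
        ext a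
        constructor
        · intro hab
          have ha : a ≠ x₀ := by rintro rfl; exact hb.2 hab
          exact hmin₁ a ha hd.1
        · intro had
          have ha : a ≠ x₀ := by rintro rfl; exact hd.2 had
          exact hmin₁ a ha hb.1
      rw [key, symmDiff_self]
      simp [Set.ncard_empty]
end

section
/- Let G be a bipartite graph with parts A and B containing no induced copy of K_{p,p} + O_{0,p}. If G contains K_{t,t} as an induced subgraph and also contains an independent set of t vertices in A and t vertices in B with no edges between them (an induced O_{t,t}), where t = B(p,p) + p − 1 and B(p,p) is the bipartite Ramsey number, then a contradiction arises; i.e., G is either K_{t,t}-free or O_{t,t}-free. -/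
/-!
Let `B = B(p,p) ≤ t`. Apply the bipartite Ramsey theorem to the edges between `B` rows of the
induced `K_{t,t}` and `B` columns of the induced `O_{t,t}`. A `K_{p,p}` there, together with `p`
rows of the `O_{t,t}`, is a copy of `K_{p,p} + O_{0,p}` whose isolated part is among the rows; an
`O_{p,p}` there, together with `p` columns of the `K_{t,t}`, is one whose isolated part is among
the columns.
-/

open Finset

/-- The bipartite Ramsey number `B(p,q)`: the minimum `N` such that every bipartite graph
with at least `N` vertices in each part contains `K_{p,q}` or `O_{p,q}` as an induced
(bipartite) subgraph. -/
noncomputable def bipRamseyNum (p q : ℕ) : ℕ :=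
  sInf {N | ∀ E : Fin N → Fin N → Prop,
    (∃ (f : Fin p ↪ Fin N) (g : Fin q ↪ Fin N), ∀ i j, E (f i) (g j)) ∨
    (∃ (f : Fin p ↪ Fin N) (g : Fin q ↪ Fin N), ∀ i j, ¬ E (f i) (g j))}

section Bipartite

variable {α β : Type*}

def HasBiclique (E : α → β → Prop) (p q : ℕ) : Prop :=
  ∃ (f : Fin p ↪ α) (g : Fin q ↪ β), ∀ i j, E (f i) (g j)

/-- An induced copy of `K_{p,p} + O_{0,p}`, the `p` isolated vertices lying in `β`. -/
def HasBicliquePlusIsolated (E : α → β → Prop) (p : ℕ) : Prop :=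
  ∃ (P : Fin p ↪ α) (Q : Fin p ↪ β) (R : Fin p ↪ β),
    (∀ j k, Q j ≠ R k) ∧ (∀ i j, E (P i) (Q j)) ∧ (∀ i k, ¬ E (P i) (R k))

theorem hasBicliquePlusIsolated_zero (E : α → β → Prop) : HasBicliquePlusIsolated E 0 :=
  ⟨.ofIsEmpty, .ofIsEmpty, .ofIsEmpty, finZeroElim, finZeroElim, finZeroElim⟩

theorem HasBicliquePlusIsolated.of_adj {E : α → β → Prop} {p : ℕ} (hp : 0 < p)
    (P : Fin p ↪ α) (Q R : Fin p ↪ β) (hQ : ∀ i j, E (P i) (Q j))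
    (hR : ∀ i k, ¬ E (P i) (R k)) : HasBicliquePlusIsolated E p :=
  ⟨P, Q, R, fun j k h => hR ⟨0, hp⟩ k (h ▸ hQ ⟨0, hp⟩ j), hQ, hR⟩

theorem HasBiclique.of_comp {γ δ : Type*} {E : α → β → Prop} {p q : ℕ} (f : γ ↪ α) (g : δ ↪ β)
    (h : HasBiclique (fun c d => E (f c) (g d)) p q) : HasBiclique E p q :=
  let ⟨P, Q, hPQ⟩ := h
  ⟨P.trans f, Q.trans g, hPQ⟩

theorem Finset.exists_embedding_mem_of_le_card {s : Finset α} {p : ℕ} (h : p ≤ #s) :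
    ∃ f : Fin p ↪ α, ∀ i, f i ∈ s :=
  ⟨((Fin.castLEEmb h).trans s.equivFin.symm.toEmbedding).trans (Function.Embedding.subtype _),
    fun _ => (s.equivFin.symm _).2⟩

/-- By pigeonhole, `p` rows share one neighbourhood `S`, and `S` or its complement has `p`
elements. -/
theorem hasBiclique_or_hasBiclique_not_of_card [Fintype α] [Fintype β] [DecidableEq β]
    (E : α → β → Prop) [DecidableRel E] (p : ℕ) (hβ : 2 * p ≤ Fintype.card β + 1)
    (hα : 2 ^ Fintype.card β * (p - 1) < Fintype.card α) :
    HasBiclique E p p ∨ HasBiclique (fun a b => ¬ E a b) p p := by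
  let nbhd : α → Finset β := fun a => {b | E a b}
  obtain ⟨S, hS⟩ := Fintype.exists_lt_card_fiber_of_mul_lt_card nbhd
    (by rwa [Fintype.card_finset])
  obtain ⟨P, hP⟩ := Finset.exists_embedding_mem_of_le_card (Nat.le_of_pred_lt hS)
  simp only [Finset.mem_filter_univ] at hP
  by_cases hSp : p ≤ #S
  · obtain ⟨Q, hQ⟩ := Finset.exists_embedding_mem_of_le_card hSp
    refine .inl ⟨P, Q, fun i j => ?_⟩
    simpa [nbhd, ← hP i] using hQ j
  · have hSc : p ≤ #Sᶜ := by rw [card_compl]; omega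
    obtain ⟨Q, hQ⟩ := Finset.exists_embedding_mem_of_le_card hSc
    refine .inr ⟨P, Q, fun i j => ?_⟩
    simpa [nbhd, ← hP i] using hQ j

end Bipartite

theorem bipRamseyNum_spec (p : ℕ) (E : Fin (bipRamseyNum p p) → Fin (bipRamseyNum p p) → Prop) :
    HasBiclique E p p ∨ HasBiclique (fun a b => ¬ E a b) p p := by
  classical
  refine Nat.sInf_mem (s := {N | ∀ E : Fin N → Fin N → Prop,
    HasBiclique E p p ∨ HasBiclique (fun a b => ¬ E a b) p p})
    ⟨2 ^ (2 * p - 1) * (p - 1) + 2 * p + 1, fun E => ?_⟩ E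
  -- `2p - 1` columns and any number of rows exceeding `2 ^ (2p - 1) * (p - 1)` suffice
  have hle : 2 * p - 1 ≤ 2 ^ (2 * p - 1) * (p - 1) + 2 * p + 1 := by omega
  let col := Fin.castLEEmb hle
  have := hasBiclique_or_hasBiclique_not_of_card (fun a c => E a (col c)) p
    (by simp only [Fintype.card_fin]; omega) (by simp only [Fintype.card_fin]; omega)
  exact this.imp (.of_comp (.refl _) col) (.of_comp (.refl _) col)

theorem le_bipRamseyNum (p : ℕ) : p ≤ bipRamseyNum p p := by
  rcases bipRamseyNum_spec p fun _ _ => True with ⟨f, -, -⟩ | ⟨f, -, -⟩ <;>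
    simpa using Fintype.card_le_of_embedding f

theorem hasBicliquePlusIsolated_of_hasBiclique {V₁ V₂ : Type*} {E : V₁ → V₂ → Prop} {p t : ℕ}
    (hp : 0 < p) (ht : bipRamseyNum p p ≤ t) (hK : HasBiclique E t t)
    (hO : HasBiclique (fun a b => ¬ E a b) t t) :
    HasBicliquePlusIsolated E p ∨ HasBicliquePlusIsolated (flip E) p := by
  obtain ⟨f, g, hfg⟩ := hK
  obtain ⟨f', g', hfg'⟩ := hO
  let e := Fin.castLEEmb ht
  let ep := Fin.castLEEmb ((le_bipRamseyNum p).trans ht)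
  rcases bipRamseyNum_spec p fun i j => E (f (e i)) (g' (e j)) with ⟨P, R, h⟩ | ⟨P, R, h⟩
  · exact .inr <| .of_adj hp ((R.trans e).trans g') ((P.trans e).trans f) (ep.trans f')
      (fun i j => h j i) (fun _ _ => hfg' _ _)
  · exact .inl <| .of_adj hp ((P.trans e).trans f) (ep.trans g) ((R.trans e).trans g')
      (fun _ _ => hfg _ _) h

theorem stmt7_general {V₁ V₂ : Type*} (E : V₁ → V₂ → Prop) (p : ℕ)
    (hfree₁ : ¬ ∃ (P : Fin p ↪ V₁) (Q : Fin p ↪ V₂) (R : Fin p ↪ V₂),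
      (∀ j k, Q j ≠ R k) ∧ (∀ i j, E (P i) (Q j)) ∧ (∀ i k, ¬ E (P i) (R k)))
    (hfree₂ : ¬ ∃ (P : Fin p ↪ V₂) (Q : Fin p ↪ V₁) (R : Fin p ↪ V₁),
      (∀ j k, Q j ≠ R k) ∧ (∀ i j, E (Q j) (P i)) ∧ (∀ i k, ¬ E (R k) (P i))) :
    ¬ ((∃ (f : Fin (bipRamseyNum p p + p - 1) ↪ V₁) (g : Fin (bipRamseyNum p p + p - 1) ↪ V₂),
          ∀ i j, E (f i) (g j)) ∧
       (∃ (f : Fin (bipRamseyNum p p + p - 1) ↪ V₁) (g : Fin (bipRamseyNum p p + p - 1) ↪ V₂),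
          ∀ i j, ¬ E (f i) (g j))) := by
  rintro ⟨hK, hO⟩
  have hp : 0 < p := Nat.pos_of_ne_zero <| by
    rintro rfl
    exact hfree₁ (hasBicliquePlusIsolated_zero E)
  rcases hasBicliquePlusIsolated_of_hasBiclique hp (by omega) hK hO with h | h
  · exact hfree₁ h
  · exact hfree₂ h

/-- A bipartite graph with no induced copy of `K_{p,p} + O_{0,p}` (in either orientation)
is `K_{t,t}`-free or `O_{t,t}`-free, where `t = B(p,p) + p - 1`. -/
theorem stmt7 {V₁ V₂ : Type*} (E : V₁ → V₂ → Prop) (p : ℕ) (hp : 0 < p)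
    (hfree₁ : ¬ ∃ (P : Fin p ↪ V₁) (Q : Fin p ↪ V₂) (R : Fin p ↪ V₂),
      (∀ j k, Q j ≠ R k) ∧ (∀ i j, E (P i) (Q j)) ∧ (∀ i k, ¬ E (P i) (R k)))
    (hfree₂ : ¬ ∃ (P : Fin p ↪ V₂) (Q : Fin p ↪ V₁) (R : Fin p ↪ V₁),
      (∀ j k, Q j ≠ R k) ∧ (∀ i j, E (Q j) (P i)) ∧ (∀ i k, ¬ E (R k) (P i))) :
    ¬ ((∃ (f : Fin (bipRamseyNum p p + p - 1) ↪ V₁) (g : Fin (bipRamseyNum p p + p - 1) ↪ V₂),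
          ∀ i j, E (f i) (g j)) ∧
       (∃ (f : Fin (bipRamseyNum p p + p - 1) ↪ V₁) (g : Fin (bipRamseyNum p p + p - 1) ↪ V₂),
          ∀ i j, ¬ E (f i) (g j))) :=
  stmt7_general E p hfree₁ hfree₂
end

section
/- Let G be a bipartite graph containing no induced P₇ and no induced K_{1,2} + 2K₂ (respecting that these are bipartite forbidden induced subgraphs). Suppose G contains six vertices x₁,y₁,x₂,y₂,x₃,y₃ inducing a perfect matching 3K₂ with edges x_iy_i, where x₁,x₂,x₃ lie in one part. Then every vertex outside these six vertices that has a neighbour in {x₁,x₂,x₃} has at least two neighbours in {x₁,x₂,x₃}. -/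
/-- `F` (a bipartite graph given as a relation between its two parts) occurs as an induced
bipartite subgraph of `E`, with the first part of `F` mapped into the first part of `E`. -/
def BipInduced {α β γ δ : Type*} (F : α → β → Prop) (E : γ → δ → Prop) : Prop :=
  ∃ (f : α ↪ γ) (g : β ↪ δ), ∀ a b, F a b ↔ E (f a) (g b)

/-- `F` occurs as an induced bipartite subgraph of `E`, in either orientation. -/
def BipContains {α β γ δ : Type*} (F : α → β → Prop) (E : γ → δ → Prop) : Prop :=
  BipInduced F E ∨ BipInduced (fun b a => F a b) E

/-- The chordless path `P₇` as a bipartite graph: vertices `a₀ b₀ a₁ b₁ a₂ b₂ a₃` in order. -/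
def P7rel : Fin 4 → Fin 3 → Prop := fun a b => a.val = b.val ∨ a.val = b.val + 1

/-- `K_{1,2} + 2K₂`: the disjoint union of a star with two leaves and two edges. -/
def K12p2K2rel : Fin 3 → Fin 4 → Prop := fun a b =>
  (a = 0 ∧ (b = 0 ∨ b = 1)) ∨ (a = 1 ∧ b = 2) ∨ (a = 2 ∧ b = 3)

/-!
If `v` had a single neighbour `xᵢ` among `x₁, x₂, x₃`, then `v, yᵢ` would be two leaves of a star
at `xᵢ`, and together with the other two matching edges this is an induced `K_{1,2} + 2K₂`.
-/

section InducedMatching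

variable {ι γ δ : Type*} {E : γ → δ → Prop} {x : ι → γ} {y : ι → δ}

theorem injective_left_of_induced_matching (hm : ∀ i j, E (x i) (y j) ↔ i = j) :
    Function.Injective x := fun i j hij =>
  ((hm j i).1 (hij ▸ (hm i i).2 rfl)).symm

theorem injective_right_of_induced_matching (hm : ∀ i j, E (x i) (y j) ↔ i = j) :
    Function.Injective y := fun i j hij =>
  (hm i j).1 (hij ▸ (hm i i).2 rfl)

theorem induced_matching_comp_perm (hm : ∀ i j, E (x i) (y j) ↔ i = j) (σ : Equiv.Perm ι) :
    ∀ i j, E (x (σ i)) (y (σ j)) ↔ i = j := fun _ _ =>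
  (hm _ _).trans σ.injective.eq_iff

end InducedMatching

/-- `K_{1,2} + 2K₂` is the matching `aᵢbᵢ₊₁` with the extra leaf `b₀` attached to `a₀`. -/
theorem K12p2K2rel_zero_right (a : Fin 3) : K12p2K2rel a 0 ↔ a = 0 := by
  revert a; unfold K12p2K2rel; decide

theorem K12p2K2rel_succ_right (a j : Fin 3) : K12p2K2rel a j.succ ↔ a = j := by
  revert a j; unfold K12p2K2rel; decide

theorem bipInduced_K12p2K2rel_of_induced_matching {γ δ : Type*} {E : γ → δ → Prop}
    {x : Fin 3 → γ} {y : Fin 3 → δ} (hm : ∀ i j, E (x i) (y j) ↔ i = j)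
    {v : δ} (hv : ∀ j, v ≠ y j) (hxv : ∀ i, E (x i) v ↔ i = 0) :
    BipInduced K12p2K2rel E := by
  have hcons : Function.Injective (Fin.cons v y : Fin 4 → δ) :=
    Fin.cons_injective_iff.2
      ⟨fun ⟨j, hj⟩ => hv j hj.symm, injective_right_of_induced_matching hm⟩
  refine ⟨⟨x, injective_left_of_induced_matching hm⟩, ⟨_, hcons⟩, fun a b => ?_⟩
  refine Fin.cases ?_ (fun j => ?_) b
  · simp only [Function.Embedding.coeFn_mk, Fin.cons_zero, hxv, K12p2K2rel_zero_right]
  · simp only [Function.Embedding.coeFn_mk, Fin.cons_succ, hm, K12p2K2rel_succ_right]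

theorem stmt8_general {V₁ V₂ : Type*} (E : V₁ → V₂ → Prop)
    (hK : ¬ BipContains K12p2K2rel E)
    (x : Fin 3 → V₁) (y : Fin 3 → V₂)
    (hm : ∀ i j, E (x i) (y j) ↔ i = j) :
    ∀ v : V₂, (∀ j, v ≠ y j) → (∃ i, E (x i) v) →
      ∃ i j, i ≠ j ∧ E (x i) v ∧ E (x j) v := by
  intro v hv ⟨i, hi⟩
  by_contra! hunique
  let σ := Equiv.swap 0 i
  have hxv : ∀ a, E (x (σ a)) v ↔ a = 0 := fun a => by
    refine ⟨fun ha => σ.injective ?_, fun ha => ?_⟩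
    · by_contra hne
      exact hunique _ _ (by simpa [σ] using hne) ha hi
    · simpa [ha, σ] using hi
  exact hK (Or.inl (bipInduced_K12p2K2rel_of_induced_matching
    (induced_matching_comp_perm hm σ) (fun j => hv (σ j)) hxv))

/-- In a `(P₇, K_{1,2}+2K₂)`-free bipartite graph containing an induced matching
`x₁y₁, x₂y₂, x₃y₃`, every vertex outside these six vertices having a neighbour among
`{x₁,x₂,x₃}` has at least two neighbours there. -/
theorem stmt8 {V₁ V₂ : Type*} (E : V₁ → V₂ → Prop)
    (hP7 : ¬ BipContains P7rel E) (hK : ¬ BipContains K12p2K2rel E)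
    (x : Fin 3 → V₁) (y : Fin 3 → V₂)
    (hx : Function.Injective x) (hy : Function.Injective y)
    (hm : ∀ i j, E (x i) (y j) ↔ i = j) :
    ∀ v : V₂, (∀ j, v ≠ y j) → (∃ i, E (x i) v) →
      ∃ i j, i ≠ j ∧ E (x i) v ∧ E (x j) v :=
  stmt8_general E hK x y hm
end

section
/- Let G be a bipartite graph containing no induced P₇ and no induced K_{1,2} + 2K₂. If G contains 3K₂ as an induced subgraph, then G has two vertices a and b with |N(a) Δ N(b)| = 2, where Δ denotes symmetric difference of neighbourhoods. -/
lemma inj3 {γ : Type*} {a b c : γ} (hab : a ≠ b) (hac : a ≠ c) (hbc : b ≠ c) :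
    Function.Injective ![a, b, c] := by
  intro i j hij; fin_cases i <;> fin_cases j <;> simp_all

lemma inj4 {γ : Type*} {a b c d : γ} (hab : a ≠ b) (hac : a ≠ c) (had : a ≠ d)
    (hbc : b ≠ c) (hbd : b ≠ d) (hcd : c ≠ d) :
    Function.Injective ![a, b, c, d] := by
  intro i j hij; fin_cases i <;> fin_cases j <;> simp_all

/-- If a `(P₇, K_{1,2}+2K₂)`-free bipartite graph contains `3K₂` as an induced subgraph,
then it has two vertices `a, b` with `|N(a) Δ N(b)| = 2`. -/
theorem stmt9 {V₁ V₂ : Type*} [Fintype V₁] [Fintype V₂] (E : V₁ → V₂ → Prop)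
    (hP7 : ¬ BipContains P7rel E) (hK : ¬ BipContains K12p2K2rel E)
    (x : Fin 3 → V₁) (y : Fin 3 → V₂)
    (hx : Function.Injective x) (hy : Function.Injective y)
    (hm : ∀ i j, E (x i) (y j) ↔ i = j) :
    (∃ a b : V₁, (symmDiff {w | E a w} {w | E b w}).ncard = 2) ∨
    (∃ a b : V₂, (symmDiff {w | E w a} {w | E w b}).ncard = 2) := by
  classical
  left
  by_contra h
  push_neg at h
  -- singleton trace rule: a vertex adjacent to exactly one x i must be y i
  have sing : ∀ i j k : Fin 3, i ≠ j → j ≠ k → i ≠ k →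
      ∀ w, E (x i) w → ¬ E (x j) w → ¬ E (x k) w → w = y i := by
    intro i j k hij hjk hik w hwi hwj hwk
    by_contra hwyi
    have hwyj : w ≠ y j := fun hh => hwj (hh ▸ (hm j j).mpr rfl)
    have hwyk : w ≠ y k := fun hh => hwk (hh ▸ (hm k k).mpr rfl)
    apply hK
    left
    refine ⟨⟨![x i, x j, x k], inj3 (fun hh => hij (hx hh)) (fun hh => hik (hx hh))
        (fun hh => hjk (hx hh))⟩,
      ⟨![w, y i, y j, y k], inj4 hwyi hwyj hwyk
        (fun hh => hij (hy hh)) (fun hh => hik (hy hh)) (fun hh => hjk (hy hh))⟩, ?_⟩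
    have hij' := hij.symm; have hjk' := hjk.symm; have hik' := hik.symm
    intro a b
    fin_cases a <;> fin_cases b <;>
      simp [K12p2K2rel, hm] <;> assumption
  -- P7 rule: two vertices with distinct 2-element traces sharing index i give P7
  have p7 : ∀ i j k : Fin 3, i ≠ j → j ≠ k → i ≠ k → ∀ w w',
      E (x i) w → E (x j) w → ¬ E (x k) w →
      E (x i) w' → E (x k) w' → ¬ E (x j) w' → False := by
    intro i j k hij hjk hik w w' hwi hwj hwk hwi' hwk' hwj'
    apply hP7
    right
    have hij' := hij.symm; have hjk' := hjk.symm; have hik' := hik.symm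
    have hyjw : y j ≠ w := fun hh => hij ((hm i j).mp (by rw [hh]; exact hwi))
    have hyjw' : y j ≠ w' := fun hh => hij ((hm i j).mp (by rw [hh]; exact hwi'))
    have hww' : w ≠ w' := fun hh => hwj' (hh ▸ hwj)
    have hwyk : w ≠ y k := fun hh => hwk (hh ▸ (hm k k).mpr rfl)
    have hwyk' : w' ≠ y k := fun hh => hik ((hm i k).mp (by rw [← hh]; exact hwi'))
    refine ⟨⟨![x j, x i, x k], inj3 (fun hh => hij' (hx hh)) (fun hh => hjk (hx hh))
        (fun hh => hik (hx hh))⟩,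
      ⟨![y j, w, w', y k], inj4 hyjw hyjw' (fun hh => hjk (hy hh)) hww' hwyk hwyk'⟩, ?_⟩
    intro b a
    fin_cases b <;> fin_cases a <;>
      simp [P7rel, hm] <;> assumption
  -- for each pair, extract a distinguishing vertex with 2-element trace
  have pair : ∀ i j k : Fin 3, i ≠ j → j ≠ k → i ≠ k →
      ∃ w, E (x k) w ∧ ((E (x i) w ∧ ¬ E (x j) w) ∨ (E (x j) w ∧ ¬ E (x i) w)) := by
    intro i j k hij hjk hik
    set S := symmDiff {w | E (x i) w} {w | E (x j) w} with hS
    have hyiS : y i ∈ S := by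
      rw [hS, Set.mem_symmDiff]
      exact Or.inl ⟨(hm i i).mpr rfl, fun hh => hij.symm ((hm j i).mp hh)⟩
    have hyjS : y j ∈ S := by
      rw [hS, Set.mem_symmDiff]
      exact Or.inr ⟨(hm j j).mpr rfl, fun hh => hij ((hm i j).mp hh)⟩
    have hS2 : S.ncard ≠ 2 := h (x i) (x j)
    have hnsub : ¬ S ⊆ {y i, y j} := by
      intro hsub
      apply hS2
      have hEq : S = {y i, y j} := by
        apply Set.Subset.antisymm hsub
        intro t ht
        rcases ht with ht | ht
        · exact ht ▸ hyiS
        · exact ht ▸ hyjS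
      rw [hEq]
      exact Set.ncard_pair (fun hh => hij (hy hh))
    obtain ⟨w, hwS, hwne⟩ := Set.not_subset.mp hnsub
    simp only [Set.mem_insert_iff, Set.mem_singleton_iff, not_or] at hwne
    rw [hS, Set.mem_symmDiff] at hwS
    have hkw : E (x k) w := by
      by_contra hkw
      rcases hwS with ⟨hi, hj⟩ | ⟨hj, hi⟩
      · exact hwne.1 (sing i j k hij hjk hik w hi hj hkw)
      · exact hwne.2 (sing j i k hij.symm hik hjk w hj hi hkw)
    rcases hwS with ⟨hi, hj⟩ | ⟨hj, hi⟩
    · exact ⟨w, hkw, Or.inl ⟨hi, hj⟩⟩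
    · exact ⟨w, hkw, Or.inr ⟨hj, hi⟩⟩
  obtain ⟨w1, hw1, hw1o⟩ := pair 0 1 2 (by decide) (by decide) (by decide)
  obtain ⟨w2, hw2, hw2o⟩ := pair 1 2 0 (by decide) (by decide) (by decide)
  obtain ⟨w3, hw3, hw3o⟩ := pair 0 2 1 (by decide) (by decide) (by decide)
  rcases hw1o with ⟨h10, h11⟩ | ⟨h11, h10⟩
  · rcases hw2o with ⟨h21, h22⟩ | ⟨h22, h21⟩
    · -- w1 trace {0,2}, w2 trace {0,1}
      exact p7 0 2 1 (by decide) (by decide) (by decide) w1 w2 h10 hw1 h11 hw2 h21 h22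
    · -- w1 trace {0,2}, w2 trace {0,2}: use w3
      rcases hw3o with ⟨h30, h32⟩ | ⟨h32, h30⟩
      · -- w3 trace {0,1}
        exact p7 0 2 1 (by decide) (by decide) (by decide) w1 w3 h10 hw1 h11 h30 hw3 h32
      · -- w3 trace {1,2}
        exact p7 2 0 1 (by decide) (by decide) (by decide) w1 w3 hw1 h10 h11 h32 hw3 h30
  · rcases hw2o with ⟨h21, h22⟩ | ⟨h22, h21⟩
    · -- w1 {1,2}, w2 {0,1}
      exact p7 1 2 0 (by decide) (by decide) (by decide) w1 w2 h11 hw1 h10 h21 hw2 h22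
    · -- w1 {1,2}, w2 {0,2}
      exact p7 2 1 0 (by decide) (by decide) (by decide) w1 w2 hw1 h11 h10 h22 hw2 h21
end

section
/- Let G be a bipartite graph with bipartition (A, B) containing no induced 'domino' (the graph obtained from C₆ by adding one long chord creating two 4-cycles, i.e., two squares sharing an edge). Suppose G[A₀ ∪ B₀] is a maximal biclique with |A₀| ≥ 2 and |B₀| ≥ 2, let C be the set of vertices in A \ A₀ adjacent to some vertex of B₀, and let D be the set of vertices in B \ B₀ adjacent to some vertex of A₀. Then there is no edge between C and D. -/
/-- The domino: two 4-cycles sharing an edge, as a bipartite graph with parts of size 3. -/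
def dominoRel : Fin 3 → Fin 3 → Prop := fun a b =>
  a.val = b.val ∨ a.val = b.val + 1 ∨ b.val = a.val + 1

/-- In a domino-free bipartite graph with a maximal biclique `G[A₀ ∪ B₀]`
(`|A₀|, |B₀| ≥ 2`), there is no edge between the set `C` of vertices outside `A₀` with a
neighbour in `B₀` and the set `D` of vertices outside `B₀` with a neighbour in `A₀`. -/
theorem stmt11 {V₁ V₂ : Type*} [Fintype V₁] [Fintype V₂] (E : V₁ → V₂ → Prop)
    (hdom : ¬ BipContains dominoRel E)
    (A₀ : Set V₁) (B₀ : Set V₂) (hA₀ : 2 ≤ A₀.ncard) (hB₀ : 2 ≤ B₀.ncard)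
    (hcomp : ∀ a ∈ A₀, ∀ b ∈ B₀, E a b)
    (hmaxA : ∀ a ∉ A₀, ¬ ∀ b ∈ B₀, E a b)
    (hmaxB : ∀ b ∉ B₀, ¬ ∀ a ∈ A₀, E a b) :
    ∀ c, c ∉ A₀ → (∃ b ∈ B₀, E c b) →
    ∀ d, d ∉ B₀ → (∃ a ∈ A₀, E a d) → ¬ E c d := by
  rintro c hc ⟨b₁, hb₁, hcb₁⟩ d hd ⟨a₁, ha₁, ha₁d⟩ hcd
  -- b₂ ∈ B₀ non-adjacent to c
  have hb2 : ∃ b₂ ∈ B₀, ¬ E c b₂ := by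
    by_contra h; push_neg at h
    exact hmaxA c hc h
  have ha2 : ∃ a₂ ∈ A₀, ¬ E a₂ d := by
    by_contra h; push_neg at h
    exact hmaxB d hd h
  obtain ⟨b₂, hb₂, hcb₂⟩ := hb2
  obtain ⟨a₂, ha₂, ha₂d⟩ := ha2
  -- distinctness
  have hca₁ : c ≠ a₁ := fun h => hc (h ▸ ha₁)
  have hca₂ : c ≠ a₂ := fun h => hc (h ▸ ha₂)
  have ha₁₂ : a₁ ≠ a₂ := fun h => ha₂d (h ▸ ha₁d)
  have hdb₁ : d ≠ b₁ := fun h => hd (h ▸ hb₁)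
  have hdb₂ : d ≠ b₂ := fun h => hd (h ▸ hb₂)
  have hb₁₂ : b₁ ≠ b₂ := fun h => hcb₂ (h ▸ hcb₁)
  apply hdom
  left
  refine ⟨⟨![c, a₁, a₂], ?_⟩, ⟨![d, b₁, b₂], ?_⟩, ?_⟩
  · intro i j hij
    fin_cases i <;> fin_cases j <;> simp_all <;> simp_all [eq_comm]
  · intro i j hij
    fin_cases i <;> fin_cases j <;> simp_all <;> simp_all [eq_comm]
  · intro i j
    have hA₁ : ∀ b ∈ B₀, E a₁ b := hcomp a₁ ha₁
    have hA₂ : ∀ b ∈ B₀, E a₂ b := hcomp a₂ ha₂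
    fin_cases i <;> fin_cases j <;>
      simp [dominoRel, Function.Embedding.coeFn_mk] <;>
      first
        | exact hcd
        | exact hcb₁
        | exact hcb₂
        | exact ha₁d
        | exact ha₂d
        | exact hA₁ b₁ hb₁
        | exact hA₁ b₂ hb₂
        | exact hA₂ b₁ hb₁
        | exact hA₂ b₂ hb₂
end

section
/- Let G be a bipartite graph with no induced P₇ and no induced P₅ + K₂. Let M = {x₁y₁, ..., x_sy_s} with s ≥ 3 be an induced matching in G with all x_i in one part. Then every vertex v outside the matching either has no neighbour among {y₁, ..., y_s}, or is adjacent to all of {y₁, ..., y_s}, or has exactly one neighbour among {y₁, ..., y_s}. -/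
/-- `P₅ + K₂`: the disjoint union of a chordless path on 5 vertices and an edge. -/
def P5K2rel : Fin 4 → Fin 3 → Prop := fun a b =>
  (a.val < 3 ∧ b.val < 2 ∧ (a.val = b.val ∨ a.val = b.val + 1)) ∨ (a.val = 3 ∧ b.val = 2)

/-- In a `(P₇, P₅+K₂)`-free bipartite graph with an induced matching `x₁y₁,…,x_sy_s`
(`s ≥ 3`), every vertex of the first part outside the matching has no neighbour,
all of them, or exactly one neighbour among `{y₁,…,y_s}`. -/
theorem stmt12 {V₁ V₂ : Type*} (E : V₁ → V₂ → Prop)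
    (hP7 : ¬ BipContains P7rel E) (hP5K2 : ¬ BipContains P5K2rel E)
    (s : ℕ) (hs : 3 ≤ s) (x : Fin s → V₁) (y : Fin s → V₂)
    (hx : Function.Injective x) (hy : Function.Injective y)
    (hm : ∀ i j, E (x i) (y j) ↔ i = j) :
    ∀ v : V₁, (∀ i, v ≠ x i) →
      (∀ i, ¬ E v (y i)) ∨ (∀ i, E v (y i)) ∨ (∃! i, E v (y i)) := by
  classical
  intro v hv
  by_cases h0 : ∀ i, ¬ E v (y i)
  · exact Or.inl h0
  by_cases h1 : ∀ i, E v (y i)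
  · exact Or.inr (Or.inl h1)
  push_neg at h0 h1
  obtain ⟨i, hi⟩ := h0
  obtain ⟨k, hk⟩ := h1
  refine Or.inr (Or.inr ⟨i, hi, fun j hj => ?_⟩)
  by_contra hji
  have hki : k ≠ i := fun h => hk (h ▸ hi)
  have hkj : k ≠ j := fun h => hk (h ▸ hj)
  have hij : i ≠ j := fun h => hji h.symm
  apply hP5K2
  left
  have hfinj : Function.Injective ![x i, v, x j, x k] := by
    intro a b hab
    fin_cases a <;> fin_cases b <;>
      simp_all [Matrix.cons_val_zero, Matrix.cons_val_one] <;>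
      first
        | rfl
        | exact absurd (hx hab) (by simp_all)
        | exact absurd (hx hab.symm) (by simp_all)
        | exact absurd hab (hv _)
        | exact absurd hab.symm (hv _)
  have hginj : Function.Injective ![y i, y j, y k] := by
    intro a b hab
    fin_cases a <;> fin_cases b <;>
      simp_all <;>
      first
        | rfl
        | exact absurd (hy hab) (by simp_all)
  refine ⟨⟨![x i, v, x j, x k], hfinj⟩, ⟨![y i, y j, y k], hginj⟩, ?_⟩
  intro a b
  fin_cases a <;> fin_cases b <;>
    simp [P5K2rel, hm, hi, hj, hk, hij, hij.symm, hki, hki.symm, hkj, hkj.symm]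
end

section
/- Let G be a bipartite graph with no induced P₇ and no induced C₄ + K₂. Let M = {x₁y₁, ..., x_sy_s} with s ≥ 3 be an induced matching with all x_i in part V₁ and all y_i in part V₂, and let B₁ be the set of vertices of V₁ outside the matching having at least one but not all of {y₁,...,y_s} as neighbours. Then for any two vertices v, u ∈ B₁, the sets N(v) ∩ {y₁,...,y_s} and N(u) ∩ {y₁,...,y_s} are either disjoint or one contains the other. -/
/-- `C₄ + K₂`: the disjoint union of a 4-cycle and an edge. -/
def C4K2rel : Fin 3 → Fin 3 → Prop := fun a b =>
  (a.val < 2 ∧ b.val < 2) ∨ (a.val = 2 ∧ b.val = 2)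

/-! If the traces of `v` and `u` on `{y₁,…,y_s}` cross, pick `yᵢ` adjacent to both, `yⱼ` adjacent
to `v` only and `y_k` adjacent to `u` only. Then `xⱼ yⱼ v yᵢ u y_k x_k` is an induced `P₇`. The
seven vertices are automatically distinct, because no two vertices of `P₇` on the same side have
the same neighbourhood. -/

theorem BipInduced.of_adj_iff {α β γ δ : Type*} {F : α → β → Prop} {E : γ → δ → Prop}
    (hF : Function.Injective F) (hF' : Function.Injective (flip F)) (f : α → γ) (g : β → δ)
    (h : ∀ a b, F a b ↔ E (f a) (g b)) : BipInduced F E := by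
  refine ⟨⟨f, fun a a' hfa => hF ?_⟩, ⟨g, fun b b' hgb => hF' ?_⟩, h⟩
  · ext b
    rw [h, h, hfa]
  · ext a
    simp only [flip, h, hgb]

theorem P7rel_injective : Function.Injective P7rel := by
  intro a a' h
  have := fun b => congrFun h b
  fin_cases a <;> fin_cases a' <;> simp_all [P7rel, Fin.forall_fin_succ]

theorem flip_P7rel_injective : Function.Injective (flip P7rel) := by
  intro b b' h
  have := fun a => congrFun h a
  fin_cases b <;> fin_cases b' <;> simp_all [flip, P7rel, Fin.forall_fin_succ]

theorem bipInduced_P7rel_of_crossing {V₁ V₂ : Type*} {E : V₁ → V₂ → Prop} {s : ℕ}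
    {x : Fin s → V₁} {y : Fin s → V₂} (hm : ∀ i j, E (x i) (y j) ↔ i = j) {v u : V₁}
    {i j k : Fin s} (hvi : E v (y i)) (hui : E u (y i)) (hvj : E v (y j)) (huj : ¬ E u (y j))
    (huk : E u (y k)) (hvk : ¬ E v (y k)) : BipInduced P7rel E := by
  have hji : j ≠ i := fun h => huj (h ▸ hui)
  have hki : k ≠ i := fun h => hvk (h ▸ hvi)
  have hjk : j ≠ k := fun h => hvk (h ▸ hvj)
  refine BipInduced.of_adj_iff P7rel_injective flip_P7rel_injective
    ![x j, v, u, x k] ![y j, y i, y k] fun a b => ?_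
  fin_cases a <;> fin_cases b <;>
    simp [P7rel, hm, hvi, hui, hvj, huj, huk, hvk, hji, hki, hjk, hjk.symm]

theorem stmt13_general {V₁ V₂ : Type*} (E : V₁ → V₂ → Prop)
    (hP7 : ¬ BipContains P7rel E)
    (s : ℕ) (x : Fin s → V₁) (y : Fin s → V₂)
    (hm : ∀ i j, E (x i) (y j) ↔ i = j) :
    ∀ v u : V₁,
      (∀ i, v ≠ x i) → (∃ i, E v (y i)) → (∃ i, ¬ E v (y i)) →
      (∀ i, u ≠ x i) → (∃ i, E u (y i)) → (∃ i, ¬ E u (y i)) →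
      (∀ i, ¬ (E v (y i) ∧ E u (y i))) ∨
      (∀ i, E v (y i) → E u (y i)) ∨
      (∀ i, E u (y i) → E v (y i)) := by
  intro v u _ _ _ _ _ _
  by_contra h
  push Not at h
  obtain ⟨⟨i, hvi, hui⟩, ⟨j, hvj, huj⟩, ⟨k, huk, hvk⟩⟩ := h
  exact hP7 (Or.inl (bipInduced_P7rel_of_crossing hm hvi hui hvj huj huk hvk))

/-- In a `(P₇, C₄+K₂)`-free bipartite graph with an induced matching `x₁y₁,…,x_sy_s`
(`s ≥ 3`), for any two vertices `v, u` of `B₁` (vertices of the first part outside the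
matching with at least one but not all of the `yᵢ` as neighbours), the neighbourhoods of
`v` and `u` within `{y₁,…,y_s}` are disjoint or comparable under inclusion. -/
theorem stmt13 {V₁ V₂ : Type*} (E : V₁ → V₂ → Prop)
    (hP7 : ¬ BipContains P7rel E) (hC4K2 : ¬ BipContains C4K2rel E)
    (s : ℕ) (hs : 3 ≤ s) (x : Fin s → V₁) (y : Fin s → V₂)
    (hx : Function.Injective x) (hy : Function.Injective y)
    (hm : ∀ i j, E (x i) (y j) ↔ i = j) :
    ∀ v u : V₁,
      (∀ i, v ≠ x i) → (∃ i, E v (y i)) → (∃ i, ¬ E v (y i)) →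
      (∀ i, u ≠ x i) → (∃ i, E u (y i)) → (∃ i, ¬ E u (y i)) →
      (∀ i, ¬ (E v (y i) ∧ E u (y i))) ∨
      (∀ i, E v (y i) → E u (y i)) ∨
      (∀ i, E u (y i) → E v (y i)) :=
  stmt13_general E hP7 s x y hm
end

section
/- Let G be a bipartite graph with no induced P₇ and no induced C₄ + K₂, with an induced matching x₁y₁, ..., x_sy_s (s ≥ 3, all x_i in V₁), and let B₁ be the set of vertices of V₁ outside the matching having at least one but not all of y₁,...,y_s as neighbours. Then any two distinct vertices y_i, y_j of the matching have at most one common neighbour in B₁. -/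
/-- In a `(P₇, C₄+K₂)`-free bipartite graph with an induced matching `x₁y₁,…,x_sy_s`
(`s ≥ 3`), any two distinct matched vertices `y_i, y_j` have at most one common neighbour
in `B₁` (the vertices of the first part outside the matching with at least one but not all
of the `yᵢ` as neighbours). -/
theorem stmt14 {V₁ V₂ : Type*} (E : V₁ → V₂ → Prop)
    (hP7 : ¬ BipContains P7rel E) (hC4K2 : ¬ BipContains C4K2rel E)
    (s : ℕ) (hs : 3 ≤ s) (x : Fin s → V₁) (y : Fin s → V₂)
    (hx : Function.Injective x) (hy : Function.Injective y)
    (hm : ∀ i j, E (x i) (y j) ↔ i = j) :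
    ∀ i j : Fin s, i ≠ j → ∀ v u : V₁,
      (∀ k, v ≠ x k) → (∃ k, E v (y k)) → (∃ k, ¬ E v (y k)) →
      (∀ k, u ≠ x k) → (∃ k, E u (y k)) → (∃ k, ¬ E u (y k)) →
      E v (y i) → E v (y j) → E u (y i) → E u (y j) → v = u := by
  intro i j hij v u hv _ hvn hu _ hun hvi hvj hui huj
  by_contra hne
  by_cases hcase : ∃ k, ¬ E v (y k) ∧ ¬ E u (y k)
  · obtain ⟨k, hvk, huk⟩ := hcase
    have hki : k ≠ i := fun h => hvk (h ▸ hvi)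
    have hkj : k ≠ j := fun h => hvk (h ▸ hvj)
    apply hC4K2
    left
    have hfinj : Function.Injective ![v, u, x k] := by
      intro a b
      fin_cases a <;> fin_cases b <;>
        simp_all [Matrix.cons_val_zero, Matrix.cons_val_one] <;>
        first
          | exact fun h => hne h
          | exact fun h => hne h.symm
          | exact fun h => hv k h
          | exact fun h => hv k h.symm
          | exact fun h => hu k h
          | exact fun h => hu k h.symm
    have hginj : Function.Injective ![y i, y j, y k] := by
      intro a b
      fin_cases a <;> fin_cases b <;> simp_all <;>
        first
          | exact fun h => hij (hy h)
          | exact fun h => hij (hy h.symm)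
          | exact fun h => hki (hy h)
          | exact fun h => hki (hy h.symm)
          | exact fun h => hkj (hy h)
          | exact fun h => hkj (hy h.symm)
    refine ⟨⟨![v, u, x k], hfinj⟩, ⟨![y i, y j, y k], hginj⟩, ?_⟩
    intro a b
    fin_cases a <;> fin_cases b <;>
      simp_all [C4K2rel, hm, hki, hkj]
  · push_neg at hcase
    obtain ⟨a, hva⟩ := hvn
    obtain ⟨b, hub⟩ := hun
    have hua : E u (y a) := hcase a hva
    have hai : a ≠ i := fun h => hva (h ▸ hvi)
    have haj : a ≠ j := fun h => hva (h ▸ hvj)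
    have hbi : b ≠ i := fun h => hub (h ▸ hui)
    have hbj : b ≠ j := fun h => hub (h ▸ huj)
    have hab : a ≠ b := fun h => hub (h ▸ hua)
    have hvb : E v (y b) := by
      by_contra hvb
      exact hub (hcase b hvb)
    have hba : b ≠ a := fun h => hab h.symm
    have hia : i ≠ a := fun h => hai h.symm
    have hib : i ≠ b := fun h => hbi h.symm
    apply hP7
    left
    have hfinj : Function.Injective ![x a, u, v, x b] := by
      intro p q
      fin_cases p <;> fin_cases q <;> simp_all <;>
        first
          | exact fun h => hu a h.symm
          | exact fun h => hu a h
          | exact fun h => hv a h.symm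
          | exact fun h => hv a h
          | exact fun h => hab (hx h)
          | exact fun h => hab (hx h.symm)
          | exact fun h => hne h
          | exact fun h => hne h.symm
          | exact fun h => hu b h
          | exact fun h => hu b h.symm
          | exact fun h => hv b h
          | exact fun h => hv b h.symm
    have hginj : Function.Injective ![y a, y i, y b] := by
      intro p q
      fin_cases p <;> fin_cases q <;> simp_all <;>
        first
          | exact fun h => hai (hy h)
          | exact fun h => hai (hy h.symm)
          | exact fun h => hab (hy h)
          | exact fun h => hab (hy h.symm)
          | exact fun h => hbi (hy h)
          | exact fun h => hbi (hy h.symm)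
    refine ⟨⟨![x a, u, v, x b], hfinj⟩, ⟨![y a, y i, y b], hginj⟩, ?_⟩
    intro p q
    fin_cases p <;> fin_cases q <;>
      simp_all [P7rel, hm, hai, hab, hbi, hba, hia, hib]
end

section
/- Let G be a bipartite graph with no induced P₇ containing a maximal biclique with parts A₀, B₀. Define A₁'' as the vertices outside A₀ (in the same part as A₀) having at least one neighbour in B₀ and at least p non-neighbours in B₀, where |A₀| ≥ p. If additionally G contains no induced Q(p) (the graph obtained from K_{p,p} plus an isolated vertex in the larger part, by adding a new vertex to the p-vertex part adjacent to all p+1 vertices of the other part), then A₁'' is empty. -/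
/-- `Q(p)`: obtained from `K_{p,p} + K₁` by adding a vertex to the smaller part adjacent
to all `p+1` vertices of the opposite part. Here index `p` in the first part is the
dominating vertex, and index `p` in the second part is the added isolated vertex `K₁`. -/
def Qrel (p : ℕ) : Fin (p + 1) → Fin (p + 1) → Prop := fun a b =>
  a.val = p ∨ (a.val < p ∧ b.val < p)

/-- In a `(P₇, Q(p))`-free bipartite graph with a maximal biclique `G[A₀ ∪ B₀]` where
`|A₀| ≥ p`, the set `A₁` of vertices outside `A₀` with at least one neighbour and at
least `p` non-neighbours in `B₀` is empty. -/
theorem stmt15 {V₁ V₂ : Type*} [Fintype V₁] [Fintype V₂] (E : V₁ → V₂ → Prop)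
    (p : ℕ) (hp : 0 < p)
    (hP7 : ¬ BipContains P7rel E) (hQ : ¬ BipContains (Qrel p) E)
    (A₀ : Set V₁) (B₀ : Set V₂)
    (hcomp : ∀ a ∈ A₀, ∀ b ∈ B₀, E a b)
    (hmaxA : ∀ a ∉ A₀, ¬ ∀ b ∈ B₀, E a b)
    (hmaxB : ∀ b ∉ B₀, ¬ ∀ a ∈ A₀, E a b)
    (hcard : p ≤ A₀.ncard) :
    ∀ a ∉ A₀, (∃ b ∈ B₀, E a b) → {b ∈ B₀ | ¬ E a b}.ncard < p := by
  classical
  intro a ha hb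
  by_contra hlt
  push_neg at hlt
  obtain ⟨b₁, hb₁B, hab₁⟩ := hb
  set S : Set V₂ := {b ∈ B₀ | ¬ E a b} with hS
  -- get embeddings Fin p ↪ A₀ and Fin p ↪ S
  have hcardA : p ≤ Fintype.card A₀ := by
    rwa [← Nat.card_eq_fintype_card, Nat.card_coe_set_eq]
  have hcardS : p ≤ Fintype.card S := by
    rwa [← Nat.card_eq_fintype_card, Nat.card_coe_set_eq]
  obtain ⟨eA⟩ : Nonempty (Fin p ↪ A₀) := by
    rw [← Fintype.card_fin p] at hcardA
    exact Function.Embedding.nonempty_of_card_le hcardA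
  obtain ⟨eS⟩ : Nonempty (Fin p ↪ S) := by
    rw [← Fintype.card_fin p] at hcardS
    exact Function.Embedding.nonempty_of_card_le hcardS
  -- the two vertex maps
  let f : Fin (p + 1) → V₁ := Fin.lastCases a (fun i => (eA i : V₁))
  let g : Fin (p + 1) → V₂ := Fin.lastCases b₁ (fun j => (eS j : V₂))
  have hflast : f (Fin.last p) = a := by simp [f]
  have hfcast : ∀ i : Fin p, f i.castSucc = (eA i : V₁) := by
    intro i; simp [f]
  have hglast : g (Fin.last p) = b₁ := by simp [g]
  have hgcast : ∀ j : Fin p, g j.castSucc = (eS j : V₂) := by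
    intro j; simp [g]
  have hfinj : Function.Injective f := by
    intro x y hxy
    induction x using Fin.lastCases with
    | last =>
      induction y using Fin.lastCases with
      | last => rfl
      | cast j =>
        rw [hflast, hfcast] at hxy
        exact absurd (hxy ▸ (eA j).2) ha
    | cast i =>
      induction y using Fin.lastCases with
      | last =>
        rw [hflast, hfcast] at hxy
        exact absurd (hxy ▸ (eA i).2) ha
      | cast j =>
        rw [hfcast, hfcast] at hxy
        have : eA i = eA j := Subtype.ext hxy
        exact congrArg Fin.castSucc (eA.injective this)
  have hb₁S : b₁ ∉ S := by
    intro h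
    exact h.2 hab₁
  have hginj : Function.Injective g := by
    intro x y hxy
    induction x using Fin.lastCases with
    | last =>
      induction y using Fin.lastCases with
      | last => rfl
      | cast j =>
        rw [hglast, hgcast] at hxy
        exact absurd (hxy ▸ (eS j).2) hb₁S
    | cast i =>
      induction y using Fin.lastCases with
      | last =>
        rw [hglast, hgcast] at hxy
        exact absurd (hxy ▸ (eS i).2) hb₁S
      | cast j =>
        rw [hgcast, hgcast] at hxy
        have : eS i = eS j := Subtype.ext hxy
        exact congrArg Fin.castSucc (eS.injective this)
  apply hQ
  right
  refine ⟨⟨f, hfinj⟩, ⟨g, hginj⟩, ?_⟩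
  intro x y
  show Qrel p y x ↔ E (f x) (g y)
  induction y using Fin.lastCases with
  | last =>
    -- dominating vertex b₁
    have : Qrel p (Fin.last p) x := Or.inl rfl
    simp only [this, true_iff, hglast]
    induction x using Fin.lastCases with
    | last => rw [hflast]; exact hab₁
    | cast i => rw [hfcast]; exact hcomp _ (eA i).2 _ hb₁B
  | cast j =>
    induction x using Fin.lastCases with
    | last =>
      -- a vs non-neighbour: both false
      rw [hflast, hgcast]
      constructor
      · rintro (h | ⟨-, h⟩)
        · exact absurd h (Nat.ne_of_lt (by simpa using j.isLt))
        · exact absurd h (by simp)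
      · intro h
        exact absurd h (eS j).2.2
    | cast i =>
      rw [hfcast, hgcast]
      have : Qrel p j.castSucc i.castSucc :=
        Or.inr ⟨by simpa using j.isLt, by simpa using i.isLt⟩
      simp only [this, true_iff]
      exact hcomp _ (eA i).2 _ (eS j).2.1
end

section
/- Let G be a bipartite graph with no induced P₇ and no induced S_{p,p}, where S_{p,p} is the double star obtained by joining the centers of two stars K_{1,p} by an edge. Suppose G contains an induced complete bipartite subgraph K_{p,p} with parts P ⊆ A and Q ⊆ B, and let u be a vertex outside this K_{p,p} and outside the neighbourhood set N of the K_{p,p}, having a neighbour v in Q. Then u has at most p − 1 neighbours outside (P ∪ Q) ∪ N(P ∪ Q). In particular, every vertex of N(P ∪ Q) has at most 2p − 1 neighbours outside N(P ∪ Q). -/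
/-- The double star `S_{p,p}`: two stars `K_{1,p}` with their centers joined by an edge.
Index `p` in each part is a center; indices `< p` are the leaves of the other center. -/
def Srel (p : ℕ) : Fin (p + 1) → Fin (p + 1) → Prop := fun a b =>
  a.val = p ∨ b.val = p

lemma exists_emb {V : Type*} [Fintype V] {p : ℕ} {S : Set V} (hS : S.ncard = p) :
    ∃ e : Fin p → V, Function.Injective e ∧ ∀ i, e i ∈ S := by
  haveI : Fintype ↥S := Fintype.ofFinite ↥S
  have hc : Fintype.card ↥S = p := by
    rw [← Nat.card_eq_fintype_card, Nat.card_coe_set_eq, hS]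
  let e := (Fintype.equivFinOfCardEq hc).symm
  exact ⟨fun i => (e i : V), fun i j h => e.injective (Subtype.ext h), fun i => (e i).2⟩

lemma key1 {V₁ V₂ : Type*} [Fintype V₁] [Fintype V₂] (E : V₁ → V₂ → Prop)
    (p : ℕ) (hp : 0 < p) (hS : ¬ BipInduced (Srel p) E)
    (P : Set V₁) (Q : Set V₂) (hPcard : P.ncard = p)
    (hcomp : ∀ a ∈ P, ∀ b ∈ Q, E a b)
    (u : V₁) (hu : u ∉ P) (v : V₂) (hv : v ∈ Q) (huv : E u v) :
    {b : V₂ | E u b ∧ b ∉ Q ∧ ∀ a ∈ P, ¬ E a b}.ncard ≤ p - 1 := by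
  set T := {b : V₂ | E u b ∧ b ∉ Q ∧ ∀ a ∈ P, ¬ E a b} with hTdef
  by_contra hle
  have hT : p ≤ T.ncard := by omega
  obtain ⟨T', hT'sub, hT'card⟩ := Set.exists_subset_card_eq hT
  obtain ⟨e₁, he₁inj, he₁mem⟩ := exists_emb hPcard
  obtain ⟨e₂, he₂inj, he₂mem⟩ := exists_emb hT'card
  have he₂T : ∀ i, e₂ i ∈ T := fun i => hT'sub (he₂mem i)
  set f : Fin (p + 1) → V₁ := fun i => if h : i.val < p then e₁ ⟨i.1, h⟩ else u with hf
  set g : Fin (p + 1) → V₂ := fun i => if h : i.val < p then e₂ ⟨i.1, h⟩ else v with hg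
  have hfinj : Function.Injective f := by
    intro i j hij
    simp only [hf] at hij
    split_ifs at hij with h1 h2 h2
    · have h0 : (⟨i.1, h1⟩ : Fin p) = ⟨j.1, h2⟩ := he₁inj hij
      have h' : i.1 = j.1 := by simpa using h0
      exact Fin.ext h'
    · exact absurd (hij ▸ he₁mem ⟨i.1, h1⟩) hu
    · exact absurd (hij ▸ he₁mem ⟨j.1, h2⟩) (by simpa [← hij] using hu)
    · apply Fin.ext; omega
  have hginj : Function.Injective g := by
    intro i j hij
    simp only [hg] at hij
    split_ifs at hij with h1 h2 h2
    · have h0 : (⟨i.1, h1⟩ : Fin p) = ⟨j.1, h2⟩ := he₂inj hij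
      have h' : i.1 = j.1 := by simpa using h0
      exact Fin.ext h'
    · exact absurd hv (by rw [← hij]; exact (he₂T ⟨i.1, h1⟩).2.1)
    · exact absurd hv (by rw [hij]; exact (he₂T ⟨j.1, h2⟩).2.1)
    · apply Fin.ext; omega
  apply hS
  refine ⟨⟨f, hfinj⟩, ⟨g, hginj⟩, fun a b => ?_⟩
  simp only [Srel, Function.Embedding.coeFn_mk, hf, hg]
  have ha := a.isLt
  have hb := b.isLt
  by_cases h1 : a.val < p <;> by_cases h2 : b.val < p <;>
    simp only [dif_pos, dif_neg, h1, h2, dite_true, dite_false]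
  · constructor
    · intro h; omega
    · intro h; exact absurd h ((he₂T ⟨b.1, h2⟩).2.2 _ (he₁mem ⟨a.1, h1⟩))
  · constructor
    · intro _; exact hcomp _ (he₁mem ⟨a.1, h1⟩) _ hv
    · intro _; right; omega
  · constructor
    · intro _; exact (he₂T ⟨b.1, h2⟩).1
    · intro _; left; omega
  · constructor
    · intro _; exact huv
    · intro _; left; omega

lemma key2 {V₁ V₂ : Type*} [Fintype V₁] [Fintype V₂] (E : V₁ → V₂ → Prop)
    (p : ℕ) (hp : 0 < p) (hS : ¬ BipInduced (Srel p) E)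
    (P : Set V₁) (Q : Set V₂) (hPcard : P.ncard = p) (hQcard : Q.ncard = p)
    (hcomp : ∀ a ∈ P, ∀ b ∈ Q, E a b)
    (u : V₁) (hu : u ∉ P) (hex : ∃ b ∈ Q, E u b) :
    {b : V₂ | E u b ∧ ¬ (b ∉ Q ∧ ∃ a ∈ P, E a b)}.ncard ≤ 2 * p - 1 := by
  obtain ⟨v, hv, huv⟩ := hex
  have h1 := key1 E p hp hS P Q hPcard hcomp u hu v hv huv
  have hsub : {b : V₂ | E u b ∧ ¬ (b ∉ Q ∧ ∃ a ∈ P, E a b)} ⊆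
      Q ∪ {b : V₂ | E u b ∧ b ∉ Q ∧ ∀ a ∈ P, ¬ E a b} := by
    intro b hb
    simp only [Set.mem_setOf_eq] at hb
    by_cases hQ : b ∈ Q
    · exact Or.inl hQ
    · right
      push_neg at hb
      exact ⟨hb.1, hQ, hb.2 hQ⟩
  calc {b : V₂ | E u b ∧ ¬ (b ∉ Q ∧ ∃ a ∈ P, E a b)}.ncard
      ≤ (Q ∪ {b : V₂ | E u b ∧ b ∉ Q ∧ ∀ a ∈ P, ¬ E a b}).ncard :=
        Set.ncard_le_ncard hsub (Set.toFinite _)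
    _ ≤ Q.ncard + {b : V₂ | E u b ∧ b ∉ Q ∧ ∀ a ∈ P, ¬ E a b}.ncard := Set.ncard_union_le _ _
    _ ≤ 2 * p - 1 := by omega

/-- In a `(P₇, S_{p,p})`-free bipartite graph containing an induced `K_{p,p}` with parts
`P ⊆ A`, `Q ⊆ B`: any vertex `u ∉ P` with a neighbour `v ∈ Q` has at most `p-1`
neighbours outside `(P ∪ Q) ∪ N(P ∪ Q)`; in particular every vertex of `N(P ∪ Q)` has at
most `2p-1` neighbours outside `N(P ∪ Q)`. -/
theorem stmt17 {V₁ V₂ : Type*} [Fintype V₁] [Fintype V₂] (E : V₁ → V₂ → Prop)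
    (p : ℕ) (hp : 0 < p)
    (hP7 : ¬ BipContains P7rel E) (hS : ¬ BipContains (Srel p) E)
    (P : Set V₁) (Q : Set V₂) (hPcard : P.ncard = p) (hQcard : Q.ncard = p)
    (hcomp : ∀ a ∈ P, ∀ b ∈ Q, E a b) :
    (∀ u : V₁, u ∉ P → ∀ v ∈ Q, E u v →
      {b : V₂ | E u b ∧ b ∉ Q ∧ ∀ a ∈ P, ¬ E a b}.ncard ≤ p - 1) ∧
    (∀ u : V₁, u ∉ P → (∃ b ∈ Q, E u b) →
      {b : V₂ | E u b ∧ ¬ (b ∉ Q ∧ ∃ a ∈ P, E a b)}.ncard ≤ 2 * p - 1) ∧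
    (∀ w : V₂, w ∉ Q → (∃ a ∈ P, E a w) →
      {a : V₁ | E a w ∧ ¬ (a ∉ P ∧ ∃ b ∈ Q, E a b)}.ncard ≤ 2 * p - 1) := by
  have hS1 : ¬ BipInduced (Srel p) E := fun h => hS (Or.inl h)
  have hS2 : ¬ BipInduced (Srel p) (fun (b : V₂) (a : V₁) => E a b) := by
    rintro ⟨f, g, h⟩
    exact hS (Or.inr ⟨g, f, fun x y => h y x⟩)
  refine ⟨?_, ?_, ?_⟩
  · intro u hu v hv huv
    exact key1 E p hp hS1 P Q hPcard hcomp u hu v hv huv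
  · intro u hu hex
    exact key2 E p hp hS1 P Q hPcard hQcard hcomp u hu hex
  · intro w hw hex
    exact key2 (fun b a => E a b) p hp hS2 Q P hQcard hPcard
      (fun b hb a ha => hcomp a ha b hb) w hw hex
end

section
/- Let G be a bipartite graph with no induced P₇ and no induced domino, with bipartition (V₁, V₂), containing a maximal biclique with parts A ⊆ V₁, B ⊆ V₂ of size at least 2 each. Let C = N(B) \ A and D = N(A) \ B, E' = N(D) \ (A ∪ C), F = N(C) \ (B ∪ D). Then there is no edge between E' and F. -/
private lemma inj3_s18 {α : Type*} {x y z : α} (h1 : x ≠ y) (h2 : x ≠ z) (h3 : y ≠ z) :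
    Function.Injective ![x, y, z] := by
  intro i j h
  fin_cases i <;> fin_cases j <;> simp_all
private lemma inj4_s18 {α : Type*} {x y z w : α} (h1 : x ≠ y) (h2 : x ≠ z) (h3 : x ≠ w)
    (h4 : y ≠ z) (h5 : y ≠ w) (h6 : z ≠ w) : Function.Injective ![x, y, z, w] := by
  intro i j h
  fin_cases i <;> fin_cases j <;> simp_all

/-- In a `(P₇, domino)`-free bipartite graph with a maximal biclique `G[A ∪ B]`
(`|A|, |B| ≥ 2`), with `C = N(B) \ A`, `D = N(A) \ B`, `E' = N(D) \ (A ∪ C)` and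
`F = N(C) \ (B ∪ D)`, there is no edge between `E'` and `F`. -/
theorem stmt18 {V₁ V₂ : Type*} [Fintype V₁] [Fintype V₂] (Ed : V₁ → V₂ → Prop)
    (hP7 : ¬ BipContains P7rel Ed) (hdom : ¬ BipContains dominoRel Ed)
    (A : Set V₁) (B : Set V₂) (hA : 2 ≤ A.ncard) (hB : 2 ≤ B.ncard)
    (hcomp : ∀ a ∈ A, ∀ b ∈ B, Ed a b)
    (hmaxA : ∀ a ∉ A, ¬ ∀ b ∈ B, Ed a b)
    (hmaxB : ∀ b ∉ B, ¬ ∀ a ∈ A, Ed a b)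
    (C : Set V₁) (D : Set V₂) (E' : Set V₁) (F : Set V₂)
    (hC : C = {v | v ∉ A ∧ ∃ b ∈ B, Ed v b})
    (hD : D = {b | b ∉ B ∧ ∃ a ∈ A, Ed a b})
    (hE' : E' = {v | v ∉ A ∧ v ∉ C ∧ ∃ d ∈ D, Ed v d})
    (hF : F = {b | b ∉ B ∧ b ∉ D ∧ ∃ c ∈ C, Ed c b}) :
    ∀ e ∈ E', ∀ f ∈ F, ¬ Ed e f := by
  intro e he f hf hef
  subst hC hD hE' hF
  obtain ⟨heA, heC, d, ⟨hdB, a, haA, had⟩, hed⟩ := he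
  obtain ⟨hfB, hfD, c, ⟨hcA, b, hbB, hcb⟩, hcf⟩ := hf
  have henB : ∀ b'' ∈ B, ¬ Ed e b'' := fun b'' hb'' h => heC ⟨heA, b'', hb'', h⟩
  have hfnA : ∀ a'' ∈ A, ¬ Ed a'' f := fun a'' ha'' h => hfD ⟨hfB, a'', ha'', h⟩
  obtain ⟨b', hb'B, hcb'⟩ : ∃ b' ∈ B, ¬ Ed c b' := by
    have := hmaxA c hcA; push_neg at this; exact this
  obtain ⟨a', ha'A, ha'd⟩ : ∃ a' ∈ A, ¬ Ed a' d := by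
    have := hmaxB d hdB; push_neg at this; exact this
  have hec : e ≠ c := fun h => heC ⟨heA, b, hbB, h ▸ hcb⟩
  have hfd : f ≠ d := fun h => hfD ⟨hfB, a, haA, h ▸ had⟩
  by_cases hcd : Ed c d
  · apply hdom; left
    refine ⟨⟨![e, c, a], inj3_s18 hec (fun h => heA (h ▸ haA)) (fun h => hcA (h ▸ haA))⟩,
      ⟨![f, d, b], inj3_s18 hfd (fun h => hfB (h ▸ hbB)) (fun h => hdB (h ▸ hbB))⟩, ?_⟩
    · intro i j
      fin_cases i <;> fin_cases j <;>
        simp only [dominoRel, Matrix.cons_val_zero, Matrix.cons_val_one, Matrix.head_cons,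
          Matrix.cons_val_two, Matrix.tail_cons, Fin.isValue] <;>
        norm_num <;>
        first
          | exact hef | exact hed | exact hcf | exact hcd | exact hcb | exact had
          | exact hcomp a haA b hbB
          | exact henB b hbB | exact hfnA a haA
  · apply hP7; right
    have hbb' : b ≠ b' := fun h => hcb' (h ▸ hcb)
    have hdf : d ≠ f := fun h => hfD (h ▸ (⟨hdB, a, haA, had⟩ : d ∉ B ∧ ∃ a ∈ A, Ed a d))
    refine ⟨⟨![e, c, a'], inj3_s18 hec (fun h => heA (h ▸ ha'A)) (fun h => hcA (h ▸ ha'A))⟩,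
      ⟨![d, f, b, b'], inj4_s18 hdf (fun h => hdB (h ▸ hbB)) (fun h => hdB (h ▸ hb'B))
        (fun h => hfB (h ▸ hbB)) (fun h => hfB (h ▸ hb'B)) hbb'⟩, ?_⟩
    · intro i j
      fin_cases i <;> fin_cases j <;>
        simp only [P7rel, Matrix.cons_val_zero, Matrix.cons_val_one, Matrix.head_cons,
          Matrix.cons_val_two, Matrix.tail_cons, Matrix.cons_val_three, Fin.isValue] <;>
        norm_num <;>
        first
          | exact hef | exact hed | exact hcf | exact hcb
          | exact hcomp a' ha'A b hbB | exact hcomp a' ha'A b' hb'B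
          | exact hcd | exact ha'd
          | exact henB b hbB | exact henB b' hb'B
          | exact hfnA a' ha'A | exact hcb'
end

section
/- Let G be a bipartite graph with no induced P₇ and no induced K_{3,3} minus an edge. Suppose G contains a maximal biclique with parts A and B each of size at least 4. Then every vertex of G outside A ∪ B has at most one neighbour in A ∪ B. -/
/-- `K_{3,3} - e`: the complete bipartite graph `K_{3,3}` minus one edge. -/
def K33erel : Fin 3 → Fin 3 → Prop := fun a b => ¬ (a.val = 2 ∧ b.val = 2)

lemma k33_aux {V₁ V₂ : Type*} (E : V₁ → V₂ → Prop) (a₁ a₂ a₃ : V₁) (b₁ b₂ b₃ : V₂)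
    (ha12 : a₁ ≠ a₂) (ha13 : a₁ ≠ a₃) (ha23 : a₂ ≠ a₃)
    (hb12 : b₁ ≠ b₂) (hb13 : b₁ ≠ b₃) (hb23 : b₂ ≠ b₃)
    (e11 : E a₁ b₁) (e12 : E a₁ b₂) (e13 : E a₁ b₃)
    (e21 : E a₂ b₁) (e22 : E a₂ b₂) (e23 : E a₂ b₃)
    (e31 : E a₃ b₁) (e32 : E a₃ b₂) (e33 : ¬ E a₃ b₃) :
    BipInduced K33erel E := by
  refine ⟨⟨![a₁,a₂,a₃], ?_⟩, ⟨![b₁,b₂,b₃], ?_⟩, ?_⟩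
  · intro x y
    fin_cases x <;> fin_cases y <;> simp_all <;> tauto
  · intro x y
    fin_cases x <;> fin_cases y <;> simp_all <;> tauto
  · intro a b
    fin_cases a <;> fin_cases b <;> simp [K33erel] <;> assumption

/-- In a `(P₇, K_{3,3}-e)`-free bipartite graph with a maximal biclique `G[A ∪ B]`
where `|A|, |B| ≥ 4`, every vertex outside `A ∪ B` has at most one neighbour in
`A ∪ B`. -/
theorem stmt19 {V₁ V₂ : Type*} [Fintype V₁] [Fintype V₂] (E : V₁ → V₂ → Prop)
    (hP7 : ¬ BipContains P7rel E) (hK : ¬ BipContains K33erel E)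
    (A : Set V₁) (B : Set V₂) (hA : 4 ≤ A.ncard) (hB : 4 ≤ B.ncard)
    (hcomp : ∀ a ∈ A, ∀ b ∈ B, E a b)
    (hmaxA : ∀ a ∉ A, ¬ ∀ b ∈ B, E a b)
    (hmaxB : ∀ b ∉ B, ¬ ∀ a ∈ A, E a b) :
    (∀ v : V₁, v ∉ A → {b ∈ B | E v b}.ncard ≤ 1) ∧
    (∀ w : V₂, w ∉ B → {a ∈ A | E a w}.ncard ≤ 1) := by
  have hKind : ¬ BipInduced K33erel E := fun h => hK (Or.inl h)
  -- two distinct elements of A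
  obtain ⟨a₁, a₂, ha₁, ha₂, ha12⟩ := (Set.one_lt_ncard_iff (A.toFinite)).mp (by omega)
  obtain ⟨b₁', b₂', hb₁', hb₂', hb12'⟩ := (Set.one_lt_ncard_iff (B.toFinite)).mp (by omega)
  constructor
  · intro v hv
    by_contra hc
    push_neg at hc
    obtain ⟨c₁, c₂, hc₁, hc₂, hc12⟩ :=
      (Set.one_lt_ncard_iff ({b ∈ B | E v b}.toFinite)).mp hc
    obtain ⟨hc₁B, hec₁⟩ := hc₁
    obtain ⟨hc₂B, hec₂⟩ := hc₂
    have := hmaxA v hv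
    push_neg at this
    obtain ⟨c₃, hc₃B, hec₃⟩ := this
    exact hKind (k33_aux E a₁ a₂ v c₁ c₂ c₃ ha12
      (fun h => hv (h ▸ ha₁)) (fun h => hv (h ▸ ha₂))
      hc12 (fun h => hec₃ (h ▸ hec₁)) (fun h => hec₃ (h ▸ hec₂))
      (hcomp a₁ ha₁ c₁ hc₁B) (hcomp a₁ ha₁ c₂ hc₂B) (hcomp a₁ ha₁ c₃ hc₃B)
      (hcomp a₂ ha₂ c₁ hc₁B) (hcomp a₂ ha₂ c₂ hc₂B) (hcomp a₂ ha₂ c₃ hc₃B)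
      hec₁ hec₂ hec₃)
  · intro w hw
    by_contra hc
    push_neg at hc
    obtain ⟨c₁, c₂, hc₁, hc₂, hc12⟩ :=
      (Set.one_lt_ncard_iff ({a ∈ A | E a w}.toFinite)).mp hc
    obtain ⟨hc₁A, hec₁⟩ := hc₁
    obtain ⟨hc₂A, hec₂⟩ := hc₂
    have := hmaxB w hw
    push_neg at this
    obtain ⟨c₃, hc₃A, hec₃⟩ := this
    exact hKind (k33_aux E c₁ c₂ c₃ b₁' b₂' w hc12
      (fun h => hec₃ (h ▸ hec₁)) (fun h => hec₃ (h ▸ hec₂))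
      hb12' (fun h => hw (h ▸ hb₁')) (fun h => hw (h ▸ hb₂'))
      (hcomp c₁ hc₁A b₁' hb₁') (hcomp c₁ hc₁A b₂' hb₂') hec₁
      (hcomp c₂ hc₂A b₁' hb₁') (hcomp c₂ hc₂A b₂' hb₂') hec₂
      (hcomp c₃ hc₃A b₁' hb₁') (hcomp c₃ hc₃A b₂' hb₂') hec₃)
end
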